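/- Let Ω ⊆ ℝ³ be open and f : Ω → ℂ a nonvanishing C² solution of (-Δ + ν)f = 0 for some function ν : Ω → ℂ. Then for every scalar C² function g : Ω → ℂ, (D + M^{Df/f})(D - M^{Df/f})g = (-Δ + ν)g, where M^a denotes the operator of quaternionic multiplication by a from the right and Df/f is the purely vectorial quaternion (grad f)/f. -/

import Mathlib

noncomputable section

/-- ℝ³ -/
abbrev V3 := Fin 3 → ℝ
/-- Complex quaternions ℍ(ℂ) -/
abbrev HC := Quaternion ℂ

/-- partial derivative ∂ₖ of a function on ℝ³ -/
noncomputable def pd {E : Type*} [NormedAddCommGroup E] [NormedSpace ℝ E]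
    (k : Fin 3) (g : V3 → E) (x : V3) : E :=
  fderiv ℝ g x (Pi.single k 1)

noncomputable def grad {E : Type*} [NormedAddCommGroup E] [NormedSpace ℝ E]
    (g : V3 → E) (x : V3) : Fin 3 → E := fun k => pd k g x

noncomputable def dvg {E : Type*} [NormedAddCommGroup E] [NormedSpace ℝ E]
    (F : V3 → Fin 3 → E) (x : V3) : E :=
  pd 0 (fun y => F y 0) x + pd 1 (fun y => F y 1) x + pd 2 (fun y => F y 2) x

noncomputable def rot {E : Type*} [NormedAddCommGroup E] [NormedSpace ℝ E]
    (F : V3 → Fin 3 → E) (x : V3) : Fin 3 → E :=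
  ![pd 1 (fun y => F y 2) x - pd 2 (fun y => F y 1) x,
    pd 2 (fun y => F y 0) x - pd 0 (fun y => F y 2) x,
    pd 0 (fun y => F y 1) x - pd 1 (fun y => F y 0) x]

/-- scalar Laplacian -/
noncomputable def lapS {E : Type*} [NormedAddCommGroup E] [NormedSpace ℝ E]
    (g : V3 → E) (x : V3) : E :=
  pd 0 (pd 0 g) x + pd 1 (pd 1 g) x + pd 2 (pd 2 g) x

/-- purely vectorial quaternion from a ℂ³ vector -/
def vecq (v : Fin 3 → ℂ) : HC := ⟨0, v 0, v 1, v 2⟩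
/-- scalar quaternion -/
def scq (a : ℂ) : HC := ⟨a, 0, 0, 0⟩

def e1 : HC := ⟨0,1,0,0⟩
def e2 : HC := ⟨0,0,1,0⟩
def e3 : HC := ⟨0,0,0,1⟩

/-- vector part of a quaternion, as a ℂ³ vector -/
def vecPart (a : HC) : Fin 3 → ℂ := ![a.imI, a.imJ, a.imK]

/-- quaternionic conjugation C_H -/
def qconj (a : HC) : HC := ⟨a.re, -a.imI, -a.imJ, -a.imK⟩

/-- componentwise partial derivative of an ℍ(ℂ)-valued function -/
noncomputable def qpd (k : Fin 3) (F : V3 → HC) (x : V3) : HC :=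
  ⟨pd k (fun y => (F y).re) x, pd k (fun y => (F y).imI) x,
   pd k (fun y => (F y).imJ) x, pd k (fun y => (F y).imK) x⟩

/-- The Moisil–Teodorescu (Dirac) operator D = Σₖ iₖ∂ₖ -/
noncomputable def Dq (F : V3 → HC) (x : V3) : HC :=
  e1 * qpd 0 F x + e2 * qpd 1 F x + e3 * qpd 2 F x

/-- componentwise Laplacian of an ℍ(ℂ)-valued function -/
noncomputable def qlap (F : V3 → HC) (x : V3) : HC :=
  qpd 0 (qpd 0 F) x + qpd 1 (qpd 1 F) x + qpd 2 (qpd 2 F) x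

/-- ContDiffOn for ℍ(ℂ)-valued functions, componentwise -/
def QContDiffOn (n : ℕ∞) (F : V3 → HC) (s : Set V3) : Prop :=
  ContDiffOn ℝ n (fun x => (F x).re) s ∧ ContDiffOn ℝ n (fun x => (F x).imI) s ∧
  ContDiffOn ℝ n (fun x => (F x).imJ) s ∧ ContDiffOn ℝ n (fun x => (F x).imK) s

/-- euclidean norm on ℝ³ -/
noncomputable def nrm (x : V3) : ℝ := Real.sqrt (x 0 ^ 2 + x 1 ^ 2 + x 2 ^ 2)

/-- fundamental solution of the Helmholtz operator -/
noncomputable def theta (α : ℂ) (x : V3) : ℂ :=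
  -Complex.exp (Complex.I * α * (nrm x : ℂ)) / (4 * Real.pi * (nrm x : ℂ))

/-- x as a purely vectorial quaternion -/
def xq (x : V3) : HC := vecq fun k => ((x k : ℝ) : ℂ)


/-!
For any vector field `q`, the product rules for `div` and `rot` give
`(D + M^q)(D - M^q) g = -Δg + g (div q + q·q) - g rot q`. For the logarithmic gradient
`q = ∇f / f` one has `rot q = 0` and `div q + q·q = Δf / f = ν`.
-/

open Matrix

section VectorCalculus

variable {E : Type*} [NormedAddCommGroup E] [NormedSpace ℝ E] {x : V3}

lemma pd_const (k : Fin 3) (c : E) : pd k (fun _ => c) x = 0 := by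
  simp [pd]

lemma pd_sub {u v : V3 → E} (hu : DifferentiableAt ℝ u x) (hv : DifferentiableAt ℝ v x)
    (k : Fin 3) :
    pd k (fun y => u y - v y) x = pd k u x - pd k v x := by
  simp [pd, fderiv_fun_sub hu hv]

lemma differentiableAt_pd {u : V3 → E} (hu : ContDiffAt ℝ 2 u x) (k : Fin 3) :
    DifferentiableAt ℝ (pd k u) x :=
  ((hu.fderiv_right (m := 1) le_rfl).differentiableAt one_ne_zero).clm_apply
    (differentiableAt_const _)

lemma pd_pd_comm {u : V3 → E} (hu : ContDiffAt ℝ 2 u x) (j k : Fin 3) :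
    pd j (pd k u) x = pd k (pd j u) x := by
  have hd : DifferentiableAt ℝ (fderiv ℝ u) x :=
    (hu.fderiv_right (m := 1) le_rfl).differentiableAt one_ne_zero
  have hpd (j k : Fin 3) :
      pd j (pd k u) x = fderiv ℝ (fderiv ℝ u) x (Pi.single j 1) (Pi.single k 1) := by
    change fderiv ℝ (fun y => fderiv ℝ u y (Pi.single k 1)) x (Pi.single j 1) = _
    simp [fderiv_clm_apply hd (differentiableAt_const _)]
  rw [hpd, hpd]
  exact hu.isSymmSndFDerivAt (by simp) _ _

variable {𝕂 : Type*} [NormedField 𝕂] [NormedAlgebra ℝ 𝕂]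

lemma pd_mul {u v : V3 → 𝕂} (hu : DifferentiableAt ℝ u x) (hv : DifferentiableAt ℝ v x)
    (k : Fin 3) : pd k (fun y => u y * v y) x = u x * pd k v x + pd k u x * v x := by
  simp [pd, fderiv_fun_mul hu hv, mul_comm]

lemma pd_inv {u : V3 → 𝕂} (hu : DifferentiableAt ℝ u x) (h0 : u x ≠ 0) (k : Fin 3) :
    pd k (fun y => (u y)⁻¹) x = -((u x ^ 2)⁻¹ * pd k u x) := by
  have hcomp : (fun y => (u y)⁻¹) = Inv.inv ∘ u := rfl
  simp only [pd, hcomp, fderiv_comp x (differentiableAt_inv h0) hu, fderiv_inv' h0,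
    ContinuousLinearMap.neg_comp, _root_.neg_apply, ContinuousLinearMap.comp_apply,
    ContinuousLinearMap.mulLeftRight_apply, neg_inj]
  ring

lemma grad_inv {u : V3 → 𝕂} (hu : DifferentiableAt ℝ u x) (h0 : u x ≠ 0) :
    grad (fun y => (u y)⁻¹) x = -(u x ^ 2)⁻¹ • grad u x := by
  ext k
  simp [grad, pd_inv hu h0]

variable {F G : V3 → Fin 3 → 𝕂}

lemma dvg_sub (hF : ∀ j, DifferentiableAt ℝ (fun y => F y j) x)
    (hG : ∀ j, DifferentiableAt ℝ (fun y => G y j) x) :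
    dvg (fun y => F y - G y) x = dvg F x - dvg G x := by
  simp only [dvg, Pi.sub_apply, pd_sub (hF _) (hG _)]
  ring

lemma rot_sub (hF : ∀ j, DifferentiableAt ℝ (fun y => F y j) x)
    (hG : ∀ j, DifferentiableAt ℝ (fun y => G y j) x) :
    rot (fun y => F y - G y) x = rot F x - rot G x := by
  ext j
  fin_cases j <;> simp [rot, pd_sub (hF _) (hG _)] <;> ring

lemma dvg_smul {a : V3 → 𝕂} (ha : DifferentiableAt ℝ a x)
    (hF : ∀ j, DifferentiableAt ℝ (fun y => F y j) x) :
    dvg (fun y => a y • F y) x = a x * dvg F x + grad a x ⬝ᵥ F x := by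
  simp only [dvg, Pi.smul_apply, smul_eq_mul, pd_mul ha (hF _), grad, dotProduct,
    Fin.sum_univ_three]
  ring

lemma rot_smul {a : V3 → 𝕂} (ha : DifferentiableAt ℝ a x)
    (hF : ∀ j, DifferentiableAt ℝ (fun y => F y j) x) :
    rot (fun y => a y • F y) x = a x • rot F x + grad a x ⨯₃ F x := by
  ext j
  fin_cases j <;> simp [rot, pd_mul ha (hF _), grad, cross_apply] <;> ring

lemma dvg_grad (u : V3 → 𝕂) : dvg (grad u) x = lapS u x := rfl

lemma rot_grad {u : V3 → 𝕂} (hu : ContDiffAt ℝ 2 u x) : rot (grad u) x = 0 := by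
  ext j
  fin_cases j <;> simp [rot, grad, pd_pd_comm hu]

end VectorCalculus

section LogGrad

variable {𝕂 : Type*} [NormedField 𝕂] [NormedAlgebra ℝ 𝕂] {f : V3 → 𝕂} {x : V3}

def logGrad (f : V3 → 𝕂) (y : V3) : Fin 3 → 𝕂 := fun k => grad f y k / f y

lemma logGrad_eq_smul : logGrad f = fun y => (f y)⁻¹ • grad f y := by
  ext y k
  simp [logGrad, div_eq_inv_mul]

lemma differentiableAt_logGrad (hf : ContDiffAt ℝ 2 f x) (h0 : f x ≠ 0) (j : Fin 3) :
    DifferentiableAt ℝ (fun y => logGrad f y j) x := by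
  simp only [logGrad, grad, div_eq_mul_inv]
  exact (differentiableAt_pd hf j).fun_mul ((hf.differentiableAt two_ne_zero).fun_inv h0)

lemma rot_logGrad (hf : ContDiffAt ℝ 2 f x) (h0 : f x ≠ 0) : rot (logGrad f) x = 0 := by
  have hdf := hf.differentiableAt two_ne_zero
  rw [logGrad_eq_smul, rot_smul (F := grad f) (hdf.fun_inv h0) (differentiableAt_pd hf),
    rot_grad hf, grad_inv hdf h0]
  simp [cross_self]

lemma dvg_logGrad_add_dotProduct_self (hf : ContDiffAt ℝ 2 f x) (h0 : f x ≠ 0) :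
    dvg (logGrad f) x + logGrad f x ⬝ᵥ logGrad f x = lapS f x / f x := by
  have hdf := hf.differentiableAt two_ne_zero
  rw [logGrad_eq_smul, dvg_smul (F := grad f) (hdf.fun_inv h0) (differentiableAt_pd hf),
    grad_inv hdf h0, dvg_grad]
  simp only [smul_dotProduct, dotProduct_smul, smul_eq_mul]
  field_simp
  ring

end LogGrad

section Quaternion

attribute [local simp] Quaternion.re_mul Quaternion.imI_mul Quaternion.imJ_mul Quaternion.imK_mul

@[simp] lemma re_vecq (v : Fin 3 → ℂ) : (vecq v).re = 0 := rfl
@[simp] lemma imI_vecq (v : Fin 3 → ℂ) : (vecq v).imI = v 0 := rfl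
@[simp] lemma imJ_vecq (v : Fin 3 → ℂ) : (vecq v).imJ = v 1 := rfl
@[simp] lemma imK_vecq (v : Fin 3 → ℂ) : (vecq v).imK = v 2 := rfl
@[simp] lemma re_scq (a : ℂ) : (scq a).re = a := rfl
@[simp] lemma imI_scq (a : ℂ) : (scq a).imI = 0 := rfl
@[simp] lemma imJ_scq (a : ℂ) : (scq a).imJ = 0 := rfl
@[simp] lemma imK_scq (a : ℂ) : (scq a).imK = 0 := rfl

lemma scq_mul_vecq (a : ℂ) (v : Fin 3 → ℂ) : scq a * vecq v = vecq (a • v) := by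
  ext <;> simp

lemma vecq_sub (v w : Fin 3 → ℂ) : vecq v - vecq w = vecq (v - w) := by
  ext <;> simp

lemma vecq_zero : vecq 0 = 0 := by
  ext <;> rfl

lemma vecq_mul_vecq (v w : Fin 3 → ℂ) :
    vecq v * vecq w = scq (-(v ⬝ᵥ w)) + vecq (v ⨯₃ w) := by
  ext <;> simp [dotProduct, Fin.sum_univ_three, cross_apply] <;> ring

lemma Dq_vecq (F : V3 → Fin 3 → ℂ) (x : V3) :
    Dq (fun y => vecq (F y)) x = scq (-dvg F x) + vecq (rot F x) := by
  ext <;>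
    simp only [Dq, Quaternion.re_add, Quaternion.imI_add, Quaternion.imJ_add, Quaternion.imK_add,
      Quaternion.re_mul, Quaternion.imI_mul, Quaternion.imJ_mul, Quaternion.imK_mul] <;>
    simp [e1, e2, e3, qpd, dvg, rot, pd_const] <;> ring

theorem Dq_add_mulRight_comp_sub_mulRight {q : V3 → Fin 3 → ℂ} {g : V3 → ℂ} {x : V3}
    (hq : ∀ j, DifferentiableAt ℝ (fun y => q y j) x) (hg : ContDiffAt ℝ 2 g x) :
    Dq (fun y => vecq (grad g y) - scq (g y) * vecq (q y)) x
        + (vecq (grad g x) - scq (g x) * vecq (q x)) * vecq (q x)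
      = scq (-lapS g x + g x * (dvg q x + q x ⬝ᵥ q x)) - vecq (g x • rot q x) := by
  have hdg := hg.differentiableAt two_ne_zero
  have hgq : ∀ j, DifferentiableAt ℝ (fun y => (g y • q y) j) x := fun j => hdg.mul (hq j)
  simp only [scq_mul_vecq, vecq_sub, Dq_vecq, vecq_mul_vecq]
  rw [dvg_sub (F := grad g) (differentiableAt_pd hg) hgq,
    rot_sub (F := grad g) (differentiableAt_pd hg) hgq, dvg_smul hdg hq, rot_smul hdg hq,
    dvg_grad, rot_grad hg]
  ext <;> simp [dotProduct, cross_apply, Fin.sum_univ_three, vecHead, vecTail] <;> ring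

end Quaternion

/-- (D + M^{Df/f})(D - M^{Df/f})g = (-Δ + ν)g where f is a
nonvanishing solution of (-Δ + ν)f = 0. -/
theorem stmt11 (Ω : Set V3) (hΩ : IsOpen Ω) (f ν : V3 → ℂ)
    (hf : ContDiffOn ℝ 2 f Ω) (hf0 : ∀ x ∈ Ω, f x ≠ 0)
    (hfe : ∀ x ∈ Ω, -lapS f x + ν x * f x = 0)
    (g : V3 → ℂ) (hg : ContDiffOn ℝ 2 g Ω) :
    ∀ x ∈ Ω,
      Dq (fun y => vecq (grad g y) - scq (g y) * vecq fun k => grad f y k / f y) x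
        + (vecq (grad g x) - scq (g x) * vecq fun k => grad f x k / f x)
            * vecq (fun k => grad f x k / f x)
      = scq (-lapS g x + ν x * g x) := by
  intro x hx
  have hfx : ContDiffAt ℝ 2 f x := hf.contDiffAt (hΩ.mem_nhds hx)
  have hgx : ContDiffAt ℝ 2 g x := hg.contDiffAt (hΩ.mem_nhds hx)
  have hν : ν x = lapS f x / f x := eq_div_of_mul_eq (hf0 x hx) (by linear_combination hfe x hx)
  calc _ = scq (-lapS g x + g x * (dvg (logGrad f) x + logGrad f x ⬝ᵥ logGrad f x))
          - vecq (g x • rot (logGrad f) x) :=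
        Dq_add_mulRight_comp_sub_mulRight (differentiableAt_logGrad hfx (hf0 x hx)) hgx
    _ = scq (-lapS g x + ν x * g x) := by
        rw [dvg_logGrad_add_dotProduct_self hfx (hf0 x hx), rot_logGrad hfx (hf0 x hx), ← hν,
          smul_zero, vecq_zero, sub_zero, mul_comm]
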